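/- For every real N_E ≥ 0 there exists a unique N_I > 0 such that N_I · I2(N_E, N_I) = 1. -/

import Mathlib

open MeasureTheory

/-- The stationary firing-rate functional `I2` of the inhibitory population. -/
noncomputable def I2 (VR VF aI bEE bEI bII νext : ℝ) (NE NI : ℝ) : ℝ :=
  ∫ s in Set.Ioi (0:ℝ),
    Real.exp (-s ^ 2 / 2) / s *
      (Real.exp (s * ((VF - (bEI * NE - bII * NI + (bEI - bEE) * νext)) / Real.sqrt aI)) -
       Real.exp (s * ((VR - (bEI * NE - bII * NI + (bEI - bEE) * νext)) / Real.sqrt aI)))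

open Real Set Filter

noncomputable def phi (VR VF A v s : ℝ) : ℝ :=
  Real.exp (-s ^ 2 / 2) / s *
    (Real.exp (s * ((VF - v) / A)) - Real.exp (s * ((VR - v) / A)))

lemma gauss_int (W : ℝ) : Integrable (fun s : ℝ => Real.exp (-s ^ 2 / 2 + s * W)) := by
  have h := (integrable_cexp_quadratic (b := (1/2 : ℂ)) (by norm_num) (W : ℂ) 0).norm
  apply h.congr
  filter_upwards with x
  rw [Complex.norm_exp]
  congr 1
  simp [← Complex.ofReal_pow, Complex.add_re, Complex.mul_re, Complex.ofReal_re, Complex.ofReal_im]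
  ring

lemma exp_sub_exp_le {a b : ℝ} (h : b ≤ a) : Real.exp a - Real.exp b ≤ (a - b) * Real.exp a := by
  have h1 := Real.add_one_le_exp (b - a)
  have h2 : Real.exp b = Real.exp a * Real.exp (b - a) := by rw [← Real.exp_add]; ring_nf
  nlinarith [Real.exp_pos a]

lemma phi_nonneg {VR VF A : ℝ} (hV : VR ≤ VF) (hA : 0 < A) (v : ℝ) {s : ℝ} (hs : s ∈ Ioi (0:ℝ)) :
    0 ≤ phi VR VF A v s := by
  have hs' : (0:ℝ) < s := hs
  unfold phi
  apply mul_nonneg (le_of_lt (div_pos (Real.exp_pos _) hs'))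
  have h : s * ((VR - v) / A) ≤ s * ((VF - v) / A) := by gcongr
  linarith [Real.exp_le_exp.2 h]

lemma phi_pos {VR VF A : ℝ} (hV : VR < VF) (hA : 0 < A) (v : ℝ) {s : ℝ} (hs : s ∈ Ioi (0:ℝ)) :
    0 < phi VR VF A v s := by
  have hs' : (0:ℝ) < s := hs
  unfold phi
  apply mul_pos (div_pos (Real.exp_pos _) hs')
  have h : s * ((VR - v) / A) < s * ((VF - v) / A) := by gcongr
  linarith [Real.exp_lt_exp.2 h]

lemma phi_le {VR VF A : ℝ} (hV : VR ≤ VF) (hA : 0 < A) {v W s : ℝ} (hs : s ∈ Ioi (0:ℝ))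
    (hW : (VF - v) / A ≤ W) :
    phi VR VF A v s ≤ (VF - VR) / A * Real.exp (-s ^ 2 / 2 + s * W) := by
  have hs' : (0:ℝ) < s := hs
  have hab : s * ((VR - v) / A) ≤ s * ((VF - v) / A) := by gcongr
  have h1 : Real.exp (s * ((VF - v) / A)) - Real.exp (s * ((VR - v) / A))
      ≤ s * ((VF - VR) / A) * Real.exp (s * W) := by
    have hd : s * ((VF - v) / A) - s * ((VR - v) / A) = s * ((VF - VR) / A) := by ring
    calc Real.exp (s * ((VF - v) / A)) - Real.exp (s * ((VR - v) / A))
        ≤ (s * ((VF - v) / A) - s * ((VR - v) / A)) * Real.exp (s * ((VF - v) / A)) :=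
          exp_sub_exp_le hab
      _ = s * ((VF - VR) / A) * Real.exp (s * ((VF - v) / A)) := by rw [hd]
      _ ≤ s * ((VF - VR) / A) * Real.exp (s * W) := by
          apply mul_le_mul_of_nonneg_left (Real.exp_le_exp.2 (by gcongr))
          exact mul_nonneg hs'.le (div_nonneg (by linarith) hA.le)
  have e0 : (0:ℝ) < Real.exp (-s ^ 2 / 2) / s := div_pos (Real.exp_pos _) hs'
  have step := mul_le_mul_of_nonneg_left h1 e0.le
  unfold phi
  refine step.trans_eq ?_
  rw [Real.exp_add]
  field_simp

lemma phi_meas {VR VF A : ℝ} (v : ℝ) :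
    AEStronglyMeasurable (phi VR VF A v) (volume.restrict (Ioi 0)) := by
  apply ContinuousOn.aestronglyMeasurable _ measurableSet_Ioi
  unfold phi
  apply ContinuousOn.mul
  · exact ContinuousOn.div (by fun_prop) continuousOn_id (fun s hs => ne_of_gt hs)
  · fun_prop

lemma phi_int {VR VF A : ℝ} (hV : VR ≤ VF) (hA : 0 < A) (v : ℝ) :
    IntegrableOn (phi VR VF A v) (Ioi 0) := by
  apply Integrable.mono' (((gauss_int ((VF - v) / A)).const_mul ((VF - VR) / A)).integrableOn)
    (phi_meas v)
  filter_upwards [ae_restrict_mem measurableSet_Ioi] with s hs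
  rw [Real.norm_eq_abs, abs_of_nonneg (phi_nonneg hV hA v hs)]
  exact phi_le hV hA hs le_rfl

lemma phi_integral_pos {VR VF A : ℝ} (hV : VR < VF) (hA : 0 < A) (v : ℝ) :
    0 < ∫ s in Ioi (0:ℝ), phi VR VF A v s := by
  rw [setIntegral_pos_iff_support_of_nonneg_ae ?_ (phi_int hV.le hA v)]
  · refine lt_of_lt_of_le ?_ (measure_mono
      (show Ioi (0:ℝ) ⊆ Function.support (phi VR VF A v) ∩ Ioi 0 from
        fun s hs => ⟨ne_of_gt (phi_pos hV hA v hs), hs⟩))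
    simp [Real.volume_Ioi]
  · filter_upwards [ae_restrict_mem measurableSet_Ioi] with s hs using phi_nonneg hV.le hA v hs

lemma phi_integral_mono {VR VF A : ℝ} (hV : VR ≤ VF) (hA : 0 < A) {v₁ v₂ : ℝ} (h : v₁ ≤ v₂) :
    ∫ s in Ioi (0:ℝ), phi VR VF A v₂ s ≤ ∫ s in Ioi (0:ℝ), phi VR VF A v₁ s := by
  apply setIntegral_mono_on (phi_int hV hA v₂) (phi_int hV hA v₁) measurableSet_Ioi
  intro s hs
  have hs' : (0:ℝ) < s := hs
  unfold phi
  apply mul_le_mul_of_nonneg_left _ (le_of_lt (div_pos (Real.exp_pos _) hs'))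
  have hd : (0:ℝ) ≤ s * ((VF - VR) / A) :=
    mul_nonneg hs'.le (div_nonneg (by linarith) hA.le)
  have e1 : s * ((VR - v₁) / A) = s * ((VF - v₁) / A) - s * ((VF - VR) / A) := by ring
  have e2 : s * ((VR - v₂) / A) = s * ((VF - v₂) / A) - s * ((VF - VR) / A) := by ring
  rw [e1, e2]
  set a₁ := s * ((VF - v₁) / A)
  set a₂ := s * ((VF - v₂) / A)
  set d := s * ((VF - VR) / A)
  have ha : a₂ ≤ a₁ := by
    simp only [a₁, a₂]
    gcongr
  have l1 : Real.exp (a₁ - d) = Real.exp a₁ * Real.exp (-d) := by rw [← Real.exp_add]; ring_nf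
  have l2 : Real.exp (a₂ - d) = Real.exp a₂ * Real.exp (-d) := by rw [← Real.exp_add]; ring_nf
  have he : Real.exp (-d) ≤ 1 := Real.exp_le_one_iff.2 (by linarith)
  have := Real.exp_le_exp.2 ha
  nlinarith [Real.exp_pos a₂, Real.exp_pos (-d)]

lemma phi_integral_continuous {VR VF A : ℝ} (hV : VR ≤ VF) (hA : 0 < A) :
    Continuous fun v => ∫ s in Ioi (0:ℝ), phi VR VF A v s := by
  rw [continuous_iff_continuousAt]
  intro v₀
  apply continuousAt_of_dominated (bound := fun s =>
      (VF - VR) / A * Real.exp (-s ^ 2 / 2 + s * ((VF - (v₀ - 1)) / A)))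
  · exact Eventually.of_forall fun v => phi_meas v
  · have hnb : ∀ᶠ v in nhds v₀, v ∈ Ioo (v₀ - 1) (v₀ + 1) :=
      Ioo_mem_nhds (by linarith) (by linarith)
    filter_upwards [hnb] with v hv
    filter_upwards [ae_restrict_mem measurableSet_Ioi] with s hs
    rw [Real.norm_eq_abs, abs_of_nonneg (phi_nonneg hV hA v hs)]
    apply phi_le hV hA hs
    gcongr
    linarith [hv.1]
  · exact ((gauss_int _).const_mul _).integrableOn
  · refine ae_of_all _ fun s => ?_
    unfold phi
    fun_prop


/-- For every `N_E ≥ 0` there is a unique `N_I > 0` with `N_I · I2(N_E, N_I) = 1`. -/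
theorem exists_unique_NI (VR VF aI bEE bEI bII νext : ℝ)
    (hV : VR < VF) (haI : 0 < aI)
    (hEE : 0 ≤ bEE) (hEI : 0 ≤ bEI) (hII : 0 ≤ bII) (hν : 0 ≤ νext) :
    ∀ NE : ℝ, 0 ≤ NE →
      ∃! NI : ℝ, 0 < NI ∧ NI * I2 VR VF aI bEE bEI bII νext NE NI = 1 := by
  intro NE _
  have hA : 0 < Real.sqrt aI := Real.sqrt_pos.mpr haI
  have hI2 : ∀ NI : ℝ, I2 VR VF aI bEE bEI bII νext NE NI
      = ∫ s in Ioi (0:ℝ),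
          phi VR VF (Real.sqrt aI) (bEI * NE - bII * NI + (bEI - bEE) * νext) s :=
    fun NI => rfl
  set g : ℝ → ℝ := fun NI => NI * I2 VR VF aI bEE bEI bII νext NE NI with hgdef
  have hIpos : ∀ NI : ℝ, 0 < I2 VR VF aI bEE bEI bII νext NE NI := fun NI => by
    rw [hI2]; exact phi_integral_pos hV hA _
  have hImono : ∀ {x y : ℝ}, x ≤ y →
      I2 VR VF aI bEE bEI bII νext NE x ≤ I2 VR VF aI bEE bEI bII νext NE y := by
    intro x y hxy
    rw [hI2, hI2]
    apply phi_integral_mono hV.le hA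
    nlinarith [mul_le_mul_of_nonneg_left hxy hII]
  have hgmono : StrictMonoOn g (Ici 0) := by
    intro x hx y hy hxy
    have h1 := hImono hxy.le
    have h2 := hIpos x
    have h3 := hIpos y
    have hx0 : (0:ℝ) ≤ x := hx
    simp only [hgdef]
    nlinarith
  have hgcont : Continuous g := by
    apply continuous_id.mul
    have hc : Continuous fun NI : ℝ => ∫ s in Ioi (0:ℝ),
        phi VR VF (Real.sqrt aI) (bEI * NE - bII * NI + (bEI - bEE) * νext) s :=
      (phi_integral_continuous hV.le hA).comp
        (show Continuous fun NI : ℝ => bEI * NE - bII * NI + (bEI - bEE) * νext by fun_prop)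
    exact hc
  set M := max 1 (2 / I2 VR VF aI bEE bEI bII νext NE 1) with hMdef
  have hM1 : (1:ℝ) ≤ M := le_max_left _ _
  have hMg : 2 ≤ g M := by
    have h2 : 2 ≤ M * I2 VR VF aI bEE bEI bII νext NE 1 :=
      (div_le_iff₀ (hIpos 1)).1 (le_max_right _ _)
    have h3 := hImono hM1
    have h4 := hIpos 1
    simp only [hgdef]
    nlinarith
  have h0M : (0:ℝ) ≤ M := by linarith
  have hIcc : (1:ℝ) ∈ Icc (g 0) (g M) := by
    constructor
    · simp [hgdef]
    · linarith
  obtain ⟨NI, hmem, hNIeq⟩ := intermediate_value_Icc h0M hgcont.continuousOn hIcc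
  have hNIpos : 0 < NI := by
    rcases hmem.1.lt_or_eq with h | h
    · exact h
    · exfalso
      rw [← h] at hNIeq
      simp [hgdef] at hNIeq
  refine ⟨NI, ⟨hNIpos, hNIeq⟩, ?_⟩
  rintro y ⟨hypos, hyeq⟩
  apply hgmono.injOn (mem_Ici.2 hypos.le) (mem_Ici.2 hNIpos.le)
  rw [hNIeq]
  exact hyeq
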